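/- arXiv:2210.13443 — 3 statements merged into one kernel-verified Lean document; each statement's English description precedes it below -/
import Mathlib

section
/- Let C be a monoidal category acting on a category M (i.e. a strong monoidal functor C → End(M), written F ↦ M F with coherence isomorphisms m_{F,G} : M G ∘ M F ≅ M(G⊗F) and m_1 : id_M ≅ M 1). For a fixed object X of M, the presheaf E : C^op → Vec given by E(F) = Hom_M(M F X, X) is a monoid object in the presheaf category with Day convolution, where the multiplication E ⊛ E → E is induced by the extranatural maps b ⊗ c ⊗ f ↦ b ∘ (M K)(c) ∘ (m_{K,L})⁻¹_X ∘ (M f)_X for b ∈ Hom(M K X, X), c ∈ Hom(M L X, X), f ∈ C(F, K⊗L), and the unit C(-, 1) → E sends f ∈ C(F, 1) to (m_1)⁻¹_X ∘ (M f)_X. In particular this multiplication is associative and unital. -/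
/-!
STATEMENT 1: Let `C` be a monoidal category acting on a category `M`, i.e. a strong
monoidal functor `Φ : C ⥤ End(M)` (with the Mathlib monoidal structure on `M ⥤ M`,
whose tensor product is composition), with coherence isomorphisms
`μ Φ F G : Φ F ⊗ Φ G ≅ Φ (F ⊗ G)` (with inverse `δ`) and `ε Φ : 𝟭 M ≅ Φ (𝟙_C)`
(with inverse `η`).  For a fixed `X : M`, the presheaf `E(F) = Hom_M((Φ F) X, X)`
is a monoid object in `([C^op, Vec], Day convolution)`:

* the multiplication `E ⊛ E → E` is induced by the extranatural family
  `dayMul (f : F ⟶ K ⊗ L) (b ∈ E K) (c ∈ E L) = c ∘ (Φ L)(b) ∘ δ_X ∘ (Φ f)_X`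
  (the mirror of the formula `b ∘ (M K)(c) ∘ m⁻¹ ∘ (M f)_X`, matching Mathlib's
  convention for the tensor product of endofunctors),
* the unit `C(-, 𝟙) → E` sends `u : F ⟶ 𝟙_C` to `η_X ∘ (Φ u)_X`.

Being a monoid structure means: `dayMul` is extranatural in `K` and `L` (so that it
descends to the Day-convolution coend), and it is associative and unital — all
stated elementwise on the generators of the Day convolution coends below.
-/

open CategoryTheory MonoidalCategory Functor.LaxMonoidal Functor.OplaxMonoidal

attribute [local instance] CategoryTheory.endofunctorMonoidalCategory

universe v₁ u₁ v₂ u₂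

variable {C : Type u₁} [Category.{v₁} C] [MonoidalCategory C]
variable {M : Type u₂} [Category.{v₂} M]

/-- The extranatural family inducing the multiplication
`Hom(M(-)X, X) ⊛ Hom(M(-)X, X) → Hom(M(-)X, X)` on generators of the
Day-convolution coend. -/
def dayMul (Φ : C ⥤ M ⥤ M) [Φ.Monoidal] (X : M) {F K L : C}
    (f : F ⟶ K ⊗ L) (b : (Φ.obj K).obj X ⟶ X) (c : (Φ.obj L).obj X ⟶ X) :
    (Φ.obj F).obj X ⟶ X :=
  (Φ.map f).app X ≫ (δ Φ K L).app X ≫ (Φ.obj L).map b ≫ c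

/-- The unit `C(-, 𝟙_C) → Hom(M(-)X, X)`: `u ↦ (m_1)⁻¹_X ∘ (M u)_X`. -/
def dayUnit (Φ : C ⥤ M ⥤ M) [Φ.Monoidal] (X : M) {F : C} (u : F ⟶ 𝟙_ C) :
    (Φ.obj F).obj X ⟶ X :=
  (Φ.map u).app X ≫ (η Φ).app X

/-- `Hom(M(-)X, X)` is a monoid object in the presheaf category with Day convolution:
the multiplication is extranatural (descends to the coend), associative and unital. -/
theorem hom_action_presheaf_is_day_monoid (Φ : C ⥤ M ⥤ M) [Φ.Monoidal] (X : M) :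
    -- extranaturality of the multiplication in `K`:
    (∀ {F K K' L : C} (f : F ⟶ K ⊗ L) (k : K ⟶ K')
        (b : (Φ.obj K').obj X ⟶ X) (c : (Φ.obj L).obj X ⟶ X),
      dayMul Φ X (f ≫ (k ▷ L)) b c = dayMul Φ X f ((Φ.map k).app X ≫ b) c) ∧
    -- extranaturality of the multiplication in `L`:
    (∀ {F K L L' : C} (f : F ⟶ K ⊗ L) (l : L ⟶ L')
        (b : (Φ.obj K).obj X ⟶ X) (c : (Φ.obj L').obj X ⟶ X),
      dayMul Φ X (f ≫ (K ◁ l)) b c = dayMul Φ X f b ((Φ.map l).app X ≫ c)) ∧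
    -- associativity (elementwise form of associativity of a Day-convolution monoid):
    (∀ {F S T K L : C} (f : F ⟶ S ⊗ T) (g : S ⟶ K ⊗ L)
        (b : (Φ.obj K).obj X ⟶ X) (c : (Φ.obj L).obj X ⟶ X) (d : (Φ.obj T).obj X ⟶ X),
      dayMul Φ X f (dayMul Φ X g b c) d =
        dayMul Φ X (f ≫ (g ▷ T) ≫ (α_ K L T).hom) b (dayMul Φ X (𝟙 (L ⊗ T)) c d)) ∧
    -- left unitality:
    (∀ {F K L : C} (f : F ⟶ K ⊗ L) (u : K ⟶ 𝟙_ C) (c : (Φ.obj L).obj X ⟶ X),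
      dayMul Φ X f (dayUnit Φ X u) c =
        (Φ.map (f ≫ (u ▷ L) ≫ (λ_ L).hom)).app X ≫ c) ∧
    -- right unitality:
    (∀ {F K L : C} (f : F ⟶ K ⊗ L) (b : (Φ.obj K).obj X ⟶ X) (u : L ⟶ 𝟙_ C),
      dayMul Φ X f b (dayUnit Φ X u) =
        (Φ.map (f ≫ (K ◁ u) ≫ (ρ_ K).hom)).app X ≫ b) := by
  refine ⟨?_, ?_, ?_, ?_, ?_⟩ <;> intros <;>
    simp [dayMul, dayUnit, Functor.map_comp]
end

section
/- Let C be a monoidal category, M a C-module category, and X ∈ M. If the presheaf F ↦ Hom_M(M F X, X) is representable, say by an object {X,X} of C via a natural isomorphism τ : C(-, {X,X}) ≅ Hom_M(M(-)X, X), then transporting the Day-convolution monoid structure on Hom_M(M(-)X, X) along τ and along the (strong monoidal) Yoneda embedding endows {X,X} with the structure of an algebra (monoid) object in C. -/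
/-!
STATEMENT 2: Let `C` be a monoidal category acting on `M` via a strong monoidal
functor `Φ : C ⥤ End(M)`, and let `X : M`.  Suppose the presheaf
`F ↦ Hom_M((Φ F) X, X)` is representable, say by `A = {X,X}`, via a natural
isomorphism `τ : C(-, A) ≅ Hom_M((Φ -) X, X)`.  Then transporting the Day-convolution
monoid structure on `Hom_M((Φ -) X, X)` (with multiplication induced by composition
in `M` — the extranatural family `dayMul` below — and unit `dayUnit`) along `τ` and
the (strong monoidal, fully faithful) Yoneda embedding endows `A = {X,X}` with the
structure of an algebra (monoid) object in `C`: there are `m : A ⊗ A ⟶ A` and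
`u : 𝟙_C ⟶ A` corresponding under `τ` to the presheaf-level multiplication and unit,
and satisfying the monoid axioms.
-/

open CategoryTheory MonoidalCategory Functor.LaxMonoidal Functor.OplaxMonoidal

attribute [local instance] CategoryTheory.endofunctorMonoidalCategory

universe v₁ u₁ v₂ u₂

variable {C : Type u₁} [Category.{v₁} C] [MonoidalCategory C]
variable {M : Type u₂} [Category.{v₂} M]

/-- If `Hom(M(-)X, X)` is representable by `A` via `τ`, then `A` carries a monoid
structure transported from the Day-convolution monoid structure: the multiplication
corresponds under `τ` (and Yoneda) to `dayMul` evaluated at `𝟙_{A ⊗ A}` and the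
evaluation morphisms `ev = τ(𝟙_A)`, and the unit corresponds to `dayUnit` at `𝟙`. -/
theorem internal_hom_monoid_of_representable (Φ : C ⥤ M ⥤ M) [Φ.Monoidal] (X : M)
    (A : C) (τ : ∀ F : C, (F ⟶ A) → ((Φ.obj F).obj X ⟶ X))
    (hbij : ∀ F : C, Function.Bijective (τ F))
    (hnat : ∀ {F F' : C} (g : F' ⟶ F) (t : F ⟶ A),
      τ F' (g ≫ t) = (Φ.map g).app X ≫ τ F t) :
    ∃ (m : A ⊗ A ⟶ A) (u : 𝟙_ C ⟶ A),
      τ (A ⊗ A) m = dayMul Φ X (𝟙 (A ⊗ A)) (τ A (𝟙 A)) (τ A (𝟙 A)) ∧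
      τ (𝟙_ C) u = dayUnit Φ X (𝟙 (𝟙_ C)) ∧
      (u ▷ A) ≫ m = (λ_ A).hom ∧
      (A ◁ u) ≫ m = (ρ_ A).hom ∧
      (m ▷ A) ≫ m = (α_ A A A).hom ≫ (A ◁ m) ≫ m := by
  obtain ⟨m, hm⟩ := (hbij (A ⊗ A)).2 (dayMul Φ X (𝟙 (A ⊗ A)) (τ A (𝟙 A)) (τ A (𝟙 A)))
  obtain ⟨u, hu⟩ := (hbij (𝟙_ C)).2 (dayUnit Φ X (𝟙 (𝟙_ C)))
  have key : ∀ {F : C} (t : F ⟶ A), τ F t = (Φ.map t).app X ≫ τ A (𝟙 A) := by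
    intro F t; simpa using hnat t (𝟙 A)
  set ev := τ A (𝟙 A) with hev
  have hm' : (Φ.map m).app X ≫ ev = (δ Φ A A).app X ≫ (Φ.obj A).map ev ≫ ev := by
    rw [← key m, hm]; simp [dayMul]
  have hu' : (Φ.map u).app X ≫ ev = (η Φ).app X := by
    rw [← key u, hu]; simp [dayUnit]
  refine ⟨m, u, hm, hu, ?_, ?_, ?_⟩
  · apply (hbij _).1
    rw [key, key]
    have hδ := NatTrans.congr_app (Functor.OplaxMonoidal.δ_natural_left Φ u A) X
    have hLU := NatTrans.congr_app (Functor.OplaxMonoidal.left_unitality_hom Φ A) X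
    simp only [NatTrans.comp_app, endofunctorMonoidalCategory_whiskerRight_app,
      endofunctorMonoidalCategory_leftUnitor_hom_app, Category.comp_id] at hδ hLU
    calc (Φ.map (u ▷ A ≫ m)).app X ≫ ev
        = (Φ.map (u ▷ A)).app X ≫ ((Φ.map m).app X ≫ ev) := by
          rw [Φ.map_comp]; simp
      _ = (Φ.map (u ▷ A)).app X ≫ (δ Φ A A).app X ≫ (Φ.obj A).map ev ≫ ev := by rw [hm']
      _ = ((δ Φ (𝟙_ C) A).app X ≫ (Φ.obj A).map ((Φ.map u).app X)) ≫
            (Φ.obj A).map ev ≫ ev := by rw [hδ]; simp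
      _ = (δ Φ (𝟙_ C) A).app X ≫ (Φ.obj A).map ((Φ.map u).app X ≫ ev) ≫ ev := by simp
      _ = (δ Φ (𝟙_ C) A).app X ≫ (Φ.obj A).map ((η Φ).app X) ≫ ev := by rw [hu']
      _ = (Φ.map (λ_ A).hom).app X ≫ ev := by rw [← hLU]; simp
  · apply (hbij _).1
    rw [key, key]
    have hδ := NatTrans.congr_app (Functor.OplaxMonoidal.δ_natural_right Φ A u) X
    have hRU := NatTrans.congr_app (Functor.OplaxMonoidal.right_unitality_hom Φ A) X
    simp only [NatTrans.comp_app, endofunctorMonoidalCategory_whiskerLeft_app,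
      endofunctorMonoidalCategory_rightUnitor_hom_app, Category.comp_id] at hδ hRU
    calc (Φ.map (A ◁ u ≫ m)).app X ≫ ev
        = (Φ.map (A ◁ u)).app X ≫ ((Φ.map m).app X ≫ ev) := by
          rw [Φ.map_comp]; simp
      _ = (Φ.map (A ◁ u)).app X ≫ (δ Φ A A).app X ≫ (Φ.obj A).map ev ≫ ev := by rw [hm']
      _ = ((δ Φ A (𝟙_ C)).app X ≫ (Φ.map u).app ((Φ.obj A).obj X)) ≫
            (Φ.obj A).map ev ≫ ev := by rw [hδ]; simp
      _ = (δ Φ A (𝟙_ C)).app X ≫ (Φ.obj (𝟙_ C)).map ev ≫ ((Φ.map u).app X ≫ ev) := by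
          simp [(Φ.map u).naturality ev]
      _ = (δ Φ A (𝟙_ C)).app X ≫ (Φ.obj (𝟙_ C)).map ev ≫ (η Φ).app X := by rw [hu']
      _ = (δ Φ A (𝟙_ C)).app X ≫ (η Φ).app ((Φ.obj A).obj X) ≫ ev := by
          have := (η Φ).naturality ev
          simp only [endofunctorMonoidalCategory_tensorUnit_map] at this
          rw [this]
      _ = (Φ.map (ρ_ A).hom).app X ≫ ev := by rw [← hRU]; simp
  · apply (hbij _).1
    rw [key, key]
    have hδL := NatTrans.congr_app (Functor.OplaxMonoidal.δ_natural_left Φ m A) X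
    have hδR := NatTrans.congr_app (Functor.OplaxMonoidal.δ_natural_right Φ A m) X
    have hAs := NatTrans.congr_app (Functor.OplaxMonoidal.associativity Φ A A A) X
    simp only [NatTrans.comp_app, endofunctorMonoidalCategory_whiskerRight_app,
      endofunctorMonoidalCategory_whiskerLeft_app,
      endofunctorMonoidalCategory_associator_hom_app, Category.comp_id] at hδL hδR hAs
    have hδnat := (δ Φ A A).naturality ev
    simp only [endofunctorMonoidalCategory_tensorObj_map] at hδnat
    calc (Φ.map (m ▷ A ≫ m)).app X ≫ ev
        = (Φ.map (m ▷ A)).app X ≫ ((Φ.map m).app X ≫ ev) := by rw [Φ.map_comp]; simp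
      _ = (Φ.map (m ▷ A)).app X ≫ (δ Φ A A).app X ≫ (Φ.obj A).map ev ≫ ev := by rw [hm']
      _ = ((δ Φ (A ⊗ A) A).app X ≫ (Φ.obj A).map ((Φ.map m).app X)) ≫
            (Φ.obj A).map ev ≫ ev := by rw [hδL]; simp
      _ = (δ Φ (A ⊗ A) A).app X ≫ (Φ.obj A).map ((Φ.map m).app X ≫ ev) ≫ ev := by simp
      _ = (δ Φ (A ⊗ A) A).app X ≫
            (Φ.obj A).map ((δ Φ A A).app X ≫ (Φ.obj A).map ev ≫ ev) ≫ ev := by rw [hm']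
      _ = ((δ Φ (A ⊗ A) A).app X ≫ (Φ.obj A).map ((δ Φ A A).app X)) ≫
            (Φ.obj A).map ((Φ.obj A).map ev) ≫ (Φ.obj A).map ev ≫ ev := by simp
      _ = ((Φ.map (α_ A A A).hom).app X ≫ (δ Φ A (A ⊗ A)).app X ≫
            (δ Φ A A).app ((Φ.obj A).obj X)) ≫
            (Φ.obj A).map ((Φ.obj A).map ev) ≫ (Φ.obj A).map ev ≫ ev := by rw [← hAs]
      _ = (Φ.map (α_ A A A).hom).app X ≫ (δ Φ A (A ⊗ A)).app X ≫
            ((Φ.obj (A ⊗ A)).map ev ≫ (δ Φ A A).app X) ≫ (Φ.obj A).map ev ≫ ev := by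
          rw [hδnat]; simp
      _ = (Φ.map (α_ A A A).hom).app X ≫ (δ Φ A (A ⊗ A)).app X ≫
            (Φ.obj (A ⊗ A)).map ev ≫ ((Φ.map m).app X ≫ ev) := by rw [hm']; simp
      _ = (Φ.map (α_ A A A).hom).app X ≫ (δ Φ A (A ⊗ A)).app X ≫
            (Φ.map m).app ((Φ.obj A).obj X) ≫ (Φ.obj A).map ev ≫ ev := by
          simp [reassoc_of% (Φ.map m).naturality ev]
      _ = (Φ.map (α_ A A A).hom).app X ≫ ((Φ.map (A ◁ m)).app X ≫ (δ Φ A A).app X) ≫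
            (Φ.obj A).map ev ≫ ev := by rw [← hδR]; simp
      _ = (Φ.map ((α_ A A A).hom ≫ (A ◁ m) ≫ m)).app X ≫ ev := by
          simp only [Φ.map_comp, NatTrans.comp_app, Category.assoc, hm']
end

section
/- Let C be a preadditive category admitting an additive generator Z (every object is a direct summand of a finite direct sum of copies of Z), and let F : C^op × C → Vec be additive in each variable. Then the coend ∫^{X∈C} F(X, X) is isomorphic to the coequalizer of the pair of maps F(Z,Z) ⊗ Hom_C(Z,Z) ⇉ F(Z,Z) given by v ⊗ f ↦ F(Z, f)(v) and v ⊗ f ↦ F(f, Z)(v). In particular, extranatural transformations out of F are determined by their component at Z. -/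
/-!
STATEMENT 6: Let `C` be a preadditive category with an additive generator `Z` (every
object is a retract of a finite direct sum of copies of `Z`) and let
`F : C^op × C → Vec` be additive in each variable.  Then
`∫^{X} F(X, X)` is isomorphic to the coequalizer of
`F(Z,Z) ⊗ Hom(Z,Z) ⇉ F(Z,Z)`, `v ⊗ f ↦ F(Z,f)(v)` and `v ⊗ f ↦ F(f,Z)(v)`.
In particular, extranatural transformations out of `F` are determined by their
component at `Z`.

Both the coend and the coequalizer are characterized by the functors they
corepresent, so the statement is formalized via universal properties: for every
vector space `V`, the extranatural families `F ⇒ V` (the maps out of the coend)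
correspond bijectively — by restriction to the component at `Z` — to the maps
`t : F(Z,Z) → V` coequalizing the displayed pair (i.e. with
`t ∘ F(Z,f) = t ∘ F(f,Z)` for all `f : Z ⟶ Z`); uniqueness is the "in particular"
clause.
-/

open CategoryTheory CategoryTheory.Limits Opposite

universe w v u

variable {k : Type w} [Field k]
variable {C : Type u} [Category.{v} C] [Preadditive C] [HasFiniteBiproducts C]

theorem coend_iso_coequalizer_of_additive_generator
    (F : Cᵒᵖ ⥤ C ⥤ ModuleCat k) [F.Additive] [∀ c : Cᵒᵖ, (F.obj c).Additive]
    (Z : C)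
    (hZ : ∀ X : C, ∃ (n : ℕ) (ι : X ⟶ ⨁ fun _ : Fin n => Z)
      (π : (⨁ fun _ : Fin n => Z) ⟶ X), ι ≫ π = 𝟙 X)
    (V : ModuleCat k) (t : (F.obj (op Z)).obj Z ⟶ V)
    (ht : ∀ f : Z ⟶ Z, (F.obj (op Z)).map f ≫ t = (F.map f.op).app Z ≫ t) :
    ∃! σ : ∀ X : C, (F.obj (op X)).obj X ⟶ V,
      (∀ {X Y : C} (f : X ⟶ Y),
        (F.obj (op Y)).map f ≫ σ Y = (F.map f.op).app X ≫ σ X) ∧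
      σ Z = t := by
  classical
  choose n ι π hret using hZ
  set a : ∀ X : C, Fin (n X) → (X ⟶ Z) :=
    fun X i => ι X ≫ biproduct.π (fun _ : Fin (n X) => Z) i with ha
  set b : ∀ X : C, Fin (n X) → (Z ⟶ X) :=
    fun X i => biproduct.ι (fun _ : Fin (n X) => Z) i ≫ π X with hb
  have hsum : ∀ X : C, ∑ i, a X i ≫ b X i = 𝟙 X := by
    intro X
    have : ∑ i, a X i ≫ b X i
        = ι X ≫ (∑ i, biproduct.π (fun _ : Fin (n X) => Z) i ≫
            biproduct.ι (fun _ : Fin (n X) => Z) i) ≫ π X := by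
      rw [Preadditive.sum_comp, Preadditive.comp_sum]
      simp [ha, hb, Category.assoc]
    rw [this, biproduct.total, Category.id_comp, hret]
  -- Key single-term manipulation, using the coequalizing property of `t`.
  have term_eq : ∀ (X Y : C) (h : Z ⟶ Y) (g : X ⟶ Z) (φ : Z ⟶ Z),
      (F.map h.op).app X ≫ ((F.obj (op Z)).map (g ≫ φ) ≫ t)
      = (F.map (φ ≫ h).op).app X ≫ ((F.obj (op Z)).map g ≫ t) := by
    intro X Y h g φ
    rw [Functor.map_comp, Category.assoc, ht φ]
    rw [show (φ ≫ h).op = h.op ≫ φ.op from rfl, F.map_comp, NatTrans.comp_app,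
      Category.assoc]
    congr 1
    rw [← Category.assoc, (F.map φ.op).naturality g, Category.assoc]
  -- the candidate family
  set σ : ∀ X : C, (F.obj (op X)).obj X ⟶ V :=
    fun X => ∑ i, (F.map (b X i).op).app X ≫ ((F.obj (op Z)).map (a X i) ≫ t)
    with hσ
  have key : ∀ {X Y : C} (f : X ⟶ Y),
      (F.obj (op Y)).map f ≫ σ Y = (F.map f.op).app X ≫ σ X := by
    intro X Y f
    have L1 : ∀ j : Fin (n Y),
        (F.obj (op Y)).map f ≫ ((F.map (b Y j).op).app Y ≫
          ((F.obj (op Z)).map (a Y j) ≫ t))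
        = ∑ i : Fin (n X), (F.map ((b X i ≫ f ≫ a Y j) ≫ b Y j).op).app X ≫
            ((F.obj (op Z)).map (a X i) ≫ t) := by
      intro j
      rw [← Category.assoc, (F.map (b Y j).op).naturality f, Category.assoc,
        ← Category.assoc ((F.obj (op Z)).map f), ← Functor.map_comp]
      have hfa : f ≫ a Y j = ∑ i : Fin (n X), a X i ≫ (b X i ≫ f ≫ a Y j) := by
        conv_lhs => rw [← Category.id_comp f, ← hsum X, Preadditive.sum_comp,
          Preadditive.sum_comp]
        simp [Category.assoc]
      conv_lhs => rw [hfa, Functor.map_sum, Preadditive.sum_comp, Preadditive.comp_sum]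
      refine Finset.sum_congr rfl fun i _ => ?_
      exact term_eq X Y (b Y j) (a X i) (b X i ≫ f ≫ a Y j)
    have L2 : ∀ i : Fin (n X),
        (F.map f.op).app X ≫ ((F.map (b X i).op).app X ≫
          ((F.obj (op Z)).map (a X i) ≫ t))
        = ∑ j : Fin (n Y), (F.map ((b X i ≫ f ≫ a Y j) ≫ b Y j).op).app X ≫
            ((F.obj (op Z)).map (a X i) ≫ t) := by
      intro i
      have hbf : b X i ≫ f = ∑ j : Fin (n Y), (b X i ≫ f ≫ a Y j) ≫ b Y j := by
        conv_lhs => rw [← Category.comp_id f, ← hsum Y]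
        rw [Preadditive.comp_sum, Preadditive.comp_sum]
        simp [Category.assoc]
      rw [← Category.assoc, ← NatTrans.comp_app, ← F.map_comp,
        show f.op ≫ (b X i).op = (b X i ≫ f).op from rfl, hbf, op_sum,
        Functor.map_sum, NatTrans.app_sum, Preadditive.sum_comp]
    rw [hσ]
    simp only [Preadditive.comp_sum]
    rw [Finset.sum_congr rfl fun j _ => L1 j, Finset.sum_congr rfl fun i _ => L2 i,
      Finset.sum_comm]
  have hσZ : σ Z = t := by
    have : σ Z = ∑ i, (F.map ((a Z i ≫ b Z i)).op).app Z ≫ t := by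
      rw [hσ]
      refine Finset.sum_congr rfl fun i _ => ?_
      rw [ht (a Z i), ← Category.assoc, ← NatTrans.comp_app, ← F.map_comp]
      rfl
    rw [this, ← Preadditive.sum_comp, ← NatTrans.app_sum, ← Functor.map_sum,
      ← op_sum, hsum Z]
    simp
  refine ⟨σ, ⟨key, hσZ⟩, ?_⟩
  rintro σ' ⟨hext, hZ'⟩
  funext X
  have : σ' X = ∑ i, (F.obj (op X)).map (a X i) ≫ ((F.obj (op X)).map (b X i) ≫ σ' X) := by
    conv_lhs => rw [← Category.id_comp (σ' X), ← (F.obj (op X)).map_id, ← hsum X,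
      Functor.map_sum, Preadditive.sum_comp]
    simp [Category.assoc]
  rw [this, hσ]
  refine Finset.sum_congr rfl fun i _ => ?_
  rw [hext (b X i), hZ', ← Category.assoc, (F.map (b X i).op).naturality (a X i),
    Category.assoc]
end
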